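/- arXiv:2108.12339 — 3 statements merged into one kernel-verified Lean document; each statement's English description precedes it below -/
import Mathlib

section
/- Let s ∈ (0,1/2) and let K be a kernel as in the context. If u : ℝ^n → ℝ is bounded and Lipschitz with Lipschitz constant M, then Lu is Hölder continuous of exponent 1 − 2s: for all x₁, x₂ ∈ ℝ^n, |Lu(x₁) − Lu(x₂)| ≤ C M |x₁ − x₂|^{1−2s}, where C depends only on n, s and Λ. -/
/-!
Write `Lu(x₁) - Lu(x₂) = ∫ (δ₁(y) - δ₂(y)) K(y) dy` with `δᵢ(y) = u(xᵢ) - u(xᵢ + y)` and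
split the integral at `|y| = r := |x₁ - x₂|`. On `B_r` each increment is bounded by `M|y|`, so
that part is at most `2MΛ ∫_{B_r} |y|^{1-n-2s}`, finite because `s < 1/2`. Off `B_r` the
difference `(u(x₁) - u(x₂)) - (u(x₁ + y) - u(x₂ + y))` is bounded by `2Mr`, so that part is at
most `2MΛ r ∫_{B_rᶜ} |y|^{-n-2s}`, finite because `s > 0`. By homogeneity the two radial
integrals are `r^{1-2s}` and `r^{-2s}` times the corresponding integrals over `B_1` and `B_1ᶜ`.
The bound `|u| ≤ B` is what makes each integral defining `Lu` converge at infinity.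
-/

open MeasureTheory Set Metric

noncomputable section

abbrev Rn (n : ℕ) := EuclideanSpace ℝ (Fin n)

/-- A uniformly elliptic, even kernel of order `2s`. -/
def IsKernel (n : ℕ) (s lam Lam : ℝ) (K : Rn n → ℝ) : Prop :=
  Measurable K ∧ (∀ y, 0 ≤ K y) ∧ (∀ y, K (-y) = K y) ∧
    ∀ y : Rn n, y ≠ 0 →
      lam * ‖y‖ ^ (-(n : ℝ) - 2 * s) ≤ K y ∧ K y ≤ Lam * ‖y‖ ^ (-(n : ℝ) - 2 * s)

/-- The integro-differential operator `Lu(x) = ∫ (u(x) - u(x+y)) K(y) dy`. -/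
def Lop {n : ℕ} (K : Rn n → ℝ) (u : Rn n → ℝ) (x : Rn n) : ℝ :=
  ∫ y, (u x - u (x + y)) * K y

open Module
open scoped Pointwise

lemma rpow_neg_le_mul_one_add_rpow_neg {r t α : ℝ} (hr : 0 < r) (hrt : r ≤ t)
    (hα : 0 ≤ α) : t ^ (-α) ≤ (1 + r⁻¹) ^ α * (1 + t) ^ (-α) := by
  have ht : 0 < t := hr.trans_le hrt
  have hc : 0 < 1 + r⁻¹ := by positivity
  have hle : 1 + t ≤ (1 + r⁻¹) * t := by
    have : 1 ≤ r⁻¹ * t := by rw [← div_eq_inv_mul, one_le_div hr]; exact hrt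
    linarith
  calc t ^ (-α) = (1 + r⁻¹) ^ α * ((1 + r⁻¹) * t) ^ (-α) := by
        rw [Real.mul_rpow hc.le ht.le, ← mul_assoc, Real.rpow_neg hc.le,
          mul_inv_cancel₀ (Real.rpow_pos_of_pos hc α).ne', one_mul]
    _ ≤ (1 + r⁻¹) ^ α * (1 + t) ^ (-α) := mul_le_mul_of_nonneg_left
        (Real.rpow_le_rpow_of_nonpos (by positivity) hle (neg_nonpos.2 hα)) (by positivity)

section RadialIntegrals

variable {E : Type*} [NormedAddCommGroup E] [NormedSpace ℝ E] [FiniteDimensional ℝ E]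
  [MeasurableSpace E] [BorelSpace E] {μ : Measure E} [μ.IsAddHaarMeasure]

lemma integrableOn_ball_rpow_neg_norm (hd : 1 ≤ finrank ℝ E) {α : ℝ} (hα : α < finrank ℝ E)
    (r : ℝ) : IntegrableOn (fun x : E ↦ ‖x‖ ^ (-α)) (ball 0 r) μ :=
  integrableOn_ball_of_norm_le_rpow (C := 1) hd hα
    (ae_of_all _ fun x ↦ by rw [one_mul, Real.norm_of_nonneg (by positivity)])
    (measurable_norm.pow_const _).aestronglyMeasurable

lemma integrableOn_compl_ball_rpow_neg_norm {α : ℝ} (hα : finrank ℝ E < α) {r : ℝ}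
    (hr : 0 < r) : IntegrableOn (fun x : E ↦ ‖x‖ ^ (-α)) (ball 0 r)ᶜ μ := by
  have hα0 : 0 ≤ α := (Nat.cast_nonneg _).trans hα.le
  refine Integrable.mono'
    ((integrable_one_add_norm hα).const_mul ((1 + r⁻¹) ^ α)).integrableOn
    (measurable_norm.pow_const _).aestronglyMeasurable.restrict
    (ae_restrict_of_forall_mem measurableSet_ball.compl fun x hx ↦ ?_)
  rw [Real.norm_of_nonneg (by positivity)]
  exact rpow_neg_le_mul_one_add_rpow_neg hr (by simpa using hx) hα0

lemma setIntegral_smul_set_rpow_norm (p : ℝ) {R : ℝ} (hR : 0 < R) (S : Set E) :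
    ∫ x in R • S, ‖x‖ ^ p ∂μ = R ^ (finrank ℝ E + p) * ∫ x in S, ‖x‖ ^ p ∂μ := by
  have h := Measure.setIntegral_comp_smul_of_pos μ (fun x : E ↦ ‖x‖ ^ p) S hR
  simp_rw [norm_smul, Real.norm_of_nonneg hR.le, Real.mul_rpow hR.le (norm_nonneg _),
    integral_const_mul, smul_eq_mul] at h
  rw [Real.rpow_add hR, Real.rpow_natCast, mul_assoc, h, ← mul_assoc,
    mul_inv_cancel₀ (by positivity), one_mul]

lemma setIntegral_ball_rpow_norm (p : ℝ) {R : ℝ} (hR : 0 < R) :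
    ∫ x in ball 0 R, ‖x‖ ^ p ∂μ =
      R ^ (finrank ℝ E + p) * ∫ x in ball (0 : E) 1, ‖x‖ ^ p ∂μ := by
  rw [← smul_unitBall_of_pos hR, setIntegral_smul_set_rpow_norm p hR]

lemma setIntegral_compl_ball_rpow_norm (p : ℝ) {R : ℝ} (hR : 0 < R) :
    ∫ x in (ball 0 R)ᶜ, ‖x‖ ^ p ∂μ =
      R ^ (finrank ℝ E + p) * ∫ x in (ball (0 : E) 1)ᶜ, ‖x‖ ^ p ∂μ := by
  rw [← smul_unitBall_of_pos hR, compl_eq_univ_sdiff, ← smul_set_univ₀ hR.ne',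
    ← smul_set_sdiff₀ hR.ne', setIntegral_smul_set_rpow_norm p hR, ← compl_eq_univ_sdiff]

end RadialIntegrals

def holderConst (n : ℕ) (s Λ : ℝ) : ℝ :=
  2 * Λ * ((∫ y in ball (0 : Rn n) 1, ‖y‖ ^ (-((n : ℝ) + 2 * s - 1))) +
    ∫ y in (ball (0 : Rn n) 1)ᶜ, ‖y‖ ^ (-((n : ℝ) + 2 * s)))

lemma holderConst_nonneg {n : ℕ} {s Λ : ℝ} (hΛ : 0 ≤ Λ) : 0 ≤ holderConst n s Λ := by
  unfold holderConst
  have h₁ : 0 ≤ ∫ y in ball (0 : Rn n) 1, ‖y‖ ^ (-((n : ℝ) + 2 * s - 1)) :=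
    integral_nonneg fun y ↦ by positivity
  have h₂ : 0 ≤ ∫ y in (ball (0 : Rn n) 1)ᶜ, ‖y‖ ^ (-((n : ℝ) + 2 * s)) :=
    integral_nonneg fun y ↦ by positivity
  positivity

section Lop

variable {n : ℕ} {s Λ M B : ℝ} {K u : Rn n → ℝ}

lemma abs_sub_mul_le_of_lipschitz (hK0 : ∀ y, 0 ≤ K y)
    (hK : ∀ y, y ≠ 0 → K y ≤ Λ * ‖y‖ ^ (-(n : ℝ) - 2 * s))
    (hM : ∀ x y, |u x - u y| ≤ M * ‖x - y‖) (x : Rn n) {y : Rn n} (hy : y ≠ 0) :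
    |(u x - u (x + y)) * K y| ≤ M * Λ * ‖y‖ ^ (-((n : ℝ) + 2 * s - 1)) := by
  have hu : |u x - u (x + y)| ≤ M * ‖y‖ := by simpa using hM x (x + y)
  have hpow : ‖y‖ * ‖y‖ ^ (-(n : ℝ) - 2 * s) = ‖y‖ ^ (-((n : ℝ) + 2 * s - 1)) := by
    rw [show -((n : ℝ) + 2 * s - 1) = 1 + (-(n : ℝ) - 2 * s) by ring,
      Real.rpow_add (norm_pos_iff.2 hy), Real.rpow_one]
  calc |(u x - u (x + y)) * K y| ≤ (M * ‖y‖) * (Λ * ‖y‖ ^ (-(n : ℝ) - 2 * s)) := by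
        rw [abs_mul, abs_of_nonneg (hK0 y)]
        exact mul_le_mul hu (hK y hy) (hK0 y) ((abs_nonneg _).trans hu)
    _ = M * Λ * ‖y‖ ^ (-((n : ℝ) + 2 * s - 1)) := by rw [← hpow]; ring

lemma abs_sub_mul_le_of_bounded (hK0 : ∀ y, 0 ≤ K y)
    (hK : ∀ y, y ≠ 0 → K y ≤ Λ * ‖y‖ ^ (-(n : ℝ) - 2 * s))
    (hB : ∀ x, |u x| ≤ B) (x : Rn n) {y : Rn n} (hy : y ≠ 0) :
    |(u x - u (x + y)) * K y| ≤ 2 * B * Λ * ‖y‖ ^ (-((n : ℝ) + 2 * s)) := by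
  have hu : |u x - u (x + y)| ≤ 2 * B := (abs_sub _ _).trans (by linarith [hB x, hB (x + y)])
  rw [abs_mul, abs_of_nonneg (hK0 y), neg_add', mul_assoc]
  exact mul_le_mul hu (hK y hy) (hK0 y) ((abs_nonneg _).trans hu)

lemma abs_sub_mul_sub_sub_mul_le (hK0 : ∀ y, 0 ≤ K y)
    (hK : ∀ y, y ≠ 0 → K y ≤ Λ * ‖y‖ ^ (-(n : ℝ) - 2 * s))
    (hM : ∀ x y, |u x - u y| ≤ M * ‖x - y‖) (x₁ x₂ : Rn n) {y : Rn n} (hy : y ≠ 0) :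
    |(u x₁ - u (x₁ + y)) * K y - (u x₂ - u (x₂ + y)) * K y| ≤
      2 * M * ‖x₁ - x₂‖ * Λ * ‖y‖ ^ (-((n : ℝ) + 2 * s)) := by
  have hu : |(u x₁ - u x₂) - (u (x₁ + y) - u (x₂ + y))| ≤ 2 * M * ‖x₁ - x₂‖ :=
    calc _ ≤ |u x₁ - u x₂| + |u (x₁ + y) - u (x₂ + y)| := abs_sub _ _
      _ ≤ M * ‖x₁ - x₂‖ + M * ‖x₁ - x₂‖ :=
          add_le_add (hM _ _) (by simpa using hM (x₁ + y) (x₂ + y))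
      _ = 2 * M * ‖x₁ - x₂‖ := by ring
  rw [← sub_mul, sub_sub_sub_comm, abs_mul, abs_of_nonneg (hK0 y), neg_add', mul_assoc _ Λ]
  exact mul_le_mul hu (hK y hy) (hK0 y) ((abs_nonneg _).trans hu)

lemma integrable_Lop_integrand [Nontrivial (Rn n)] (hs : s ∈ Ioo (0 : ℝ) (1 / 2))
    (hKm : Measurable K) (hK0 : ∀ y, 0 ≤ K y)
    (hK : ∀ y, y ≠ 0 → K y ≤ Λ * ‖y‖ ^ (-(n : ℝ) - 2 * s))
    (hM : ∀ x y, |u x - u y| ≤ M * ‖x - y‖) (hB : ∀ x, |u x| ≤ B) (x : Rn n) :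
    Integrable fun y ↦ (u x - u (x + y)) * K y := by
  have hd : finrank ℝ (Rn n) = n := finrank_euclideanSpace_fin
  have hu : Continuous u := (LipschitzWith.of_dist_le' (K := M) fun a b ↦ by
    simpa [Real.dist_eq, dist_eq_norm] using hM a b).continuous
  have hmeas : AEStronglyMeasurable (fun y ↦ (u x - u (x + y)) * K y) :=
    ((measurable_const.sub (hu.measurable.comp (measurable_const_add x))).mul
      hKm).aestronglyMeasurable
  have hnear : IntegrableOn (fun y ↦ (u x - u (x + y)) * K y) (ball 0 1) :=
    Integrable.mono' ((integrableOn_ball_rpow_neg_norm (α := n + 2 * s - 1) finrank_pos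
      (by rw [hd]; linarith [hs.2]) 1).const_mul (M * Λ)) hmeas.restrict <|
      ae_restrict_of_ae <| by
        filter_upwards [volume.ae_ne 0] with y hy
        exact abs_sub_mul_le_of_lipschitz hK0 hK hM x hy
  have hfar : IntegrableOn (fun y ↦ (u x - u (x + y)) * K y) (ball 0 1)ᶜ :=
    Integrable.mono' ((integrableOn_compl_ball_rpow_neg_norm (α := n + 2 * s)
      (by rw [hd]; linarith [hs.1]) one_pos).const_mul (2 * B * Λ)) hmeas.restrict <|
      ae_restrict_of_ae <| by
        filter_upwards [volume.ae_ne 0] with y hy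
        exact abs_sub_mul_le_of_bounded hK0 hK hB x hy
  rw [← integrableOn_univ, ← union_compl_self (ball (0 : Rn n) 1)]
  exact hnear.union hfar

lemma norm_setIntegral_ball_sub_le [Nontrivial (Rn n)] (hs : s < 1 / 2)
    (hK0 : ∀ y, 0 ≤ K y) (hK : ∀ y, y ≠ 0 → K y ≤ Λ * ‖y‖ ^ (-(n : ℝ) - 2 * s))
    (hM : ∀ x y, |u x - u y| ≤ M * ‖x - y‖) (x₁ x₂ : Rn n) {r : ℝ} (hr : 0 < r) :
    ‖∫ y in ball (0 : Rn n) r, ((u x₁ - u (x₁ + y)) * K y - (u x₂ - u (x₂ + y)) * K y)‖ ≤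
      2 * (M * Λ) *
        (r ^ (1 - 2 * s) * ∫ y in ball (0 : Rn n) 1, ‖y‖ ^ (-((n : ℝ) + 2 * s - 1))) := by
  have hd : finrank ℝ (Rn n) = n := finrank_euclideanSpace_fin
  calc _ ≤ ∫ y in ball (0 : Rn n) r, 2 * (M * Λ) * ‖y‖ ^ (-((n : ℝ) + 2 * s - 1)) := by
        refine norm_integral_le_of_norm_le ((integrableOn_ball_rpow_neg_norm (μ := volume)
          (α := n + 2 * s - 1) finrank_pos (by rw [hd]; linarith) r).const_mul _)
          (ae_restrict_of_ae ?_)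
        filter_upwards [volume.ae_ne 0] with y hy
        have hy₁ := abs_sub_mul_le_of_lipschitz hK0 hK hM x₁ hy
        have hy₂ := abs_sub_mul_le_of_lipschitz hK0 hK hM x₂ hy
        exact (abs_sub _ _).trans (by linarith)
    _ = _ := by
        rw [integral_const_mul, setIntegral_ball_rpow_norm _ hr, hd]
        ring_nf

lemma norm_setIntegral_compl_ball_sub_le [Nontrivial (Rn n)] (hs : 0 < s) (hK0 : ∀ y, 0 ≤ K y)
    (hK : ∀ y, y ≠ 0 → K y ≤ Λ * ‖y‖ ^ (-(n : ℝ) - 2 * s))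
    (hM : ∀ x y, |u x - u y| ≤ M * ‖x - y‖) {x₁ x₂ : Rn n} (hx : x₁ ≠ x₂) :
    ‖∫ y in (ball (0 : Rn n) ‖x₁ - x₂‖)ᶜ,
        ((u x₁ - u (x₁ + y)) * K y - (u x₂ - u (x₂ + y)) * K y)‖ ≤
      2 * (M * Λ) * (‖x₁ - x₂‖ ^ (1 - 2 * s) *
        ∫ y in (ball (0 : Rn n) 1)ᶜ, ‖y‖ ^ (-((n : ℝ) + 2 * s))) := by
  have hd : finrank ℝ (Rn n) = n := finrank_euclideanSpace_fin
  have hr : 0 < ‖x₁ - x₂‖ := norm_pos_iff.2 (sub_ne_zero.2 hx)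
  calc _ ≤ ∫ y in (ball (0 : Rn n) ‖x₁ - x₂‖)ᶜ,
          2 * M * ‖x₁ - x₂‖ * Λ * ‖y‖ ^ (-((n : ℝ) + 2 * s)) := by
        refine norm_integral_le_of_norm_le ((integrableOn_compl_ball_rpow_neg_norm
          (μ := volume) (α := n + 2 * s) (by rw [hd]; linarith) hr).const_mul _)
          (ae_restrict_of_ae ?_)
        filter_upwards [volume.ae_ne 0] with y hy
        exact abs_sub_mul_sub_sub_mul_le hK0 hK hM x₁ x₂ hy
    _ = 2 * (M * Λ) * (‖x₁ - x₂‖ ^ (1 : ℝ) * ‖x₁ - x₂‖ ^ (-(2 * s)) *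
          ∫ y in (ball (0 : Rn n) 1)ᶜ, ‖y‖ ^ (-((n : ℝ) + 2 * s))) := by
        rw [integral_const_mul, setIntegral_compl_ball_rpow_norm _ hr, hd, Real.rpow_one]
        ring_nf
    _ = _ := by rw [← Real.rpow_add hr, ← sub_eq_add_neg]

lemma abs_Lop_sub_Lop_le (hs : s ∈ Ioo (0 : ℝ) (1 / 2)) (hKm : Measurable K)
    (hK0 : ∀ y, 0 ≤ K y) (hK : ∀ y, y ≠ 0 → K y ≤ Λ * ‖y‖ ^ (-(n : ℝ) - 2 * s))
    (hM : ∀ x y, |u x - u y| ≤ M * ‖x - y‖) (hB : ∀ x, |u x| ≤ B) {x₁ x₂ : Rn n}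
    (hx : x₁ ≠ x₂) :
    |Lop K u x₁ - Lop K u x₂| ≤ holderConst n s Λ * M * ‖x₁ - x₂‖ ^ (1 - 2 * s) := by
  have : Nontrivial (Rn n) := nontrivial_of_ne x₁ x₂ hx
  have h₁ := integrable_Lop_integrand hs hKm hK0 hK hM hB x₁
  have h₂ := integrable_Lop_integrand hs hKm hK0 hK hM hB x₂
  have hg : Integrable fun y ↦ (u x₁ - u (x₁ + y)) * K y - (u x₂ - u (x₂ + y)) * K y :=
    h₁.sub h₂
  rw [Lop, Lop, ← integral_sub h₁ h₂,
    ← integral_add_compl (measurableSet_ball (x := 0) (ε := ‖x₁ - x₂‖)) hg, ← Real.norm_eq_abs]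
  have hnear := norm_setIntegral_ball_sub_le hs.2 hK0 hK hM x₁ x₂
    (norm_pos_iff.2 (sub_ne_zero.2 hx))
  have hfar := norm_setIntegral_compl_ball_sub_le hs.1 hK0 hK hM hx
  exact (norm_add_le _ _).trans
    ((add_le_add hnear hfar).trans_eq (by unfold holderConst; ring))

end Lop

/-- for `s ∈ (0,1/2)`, if `u` is bounded and Lipschitz with constant `M`,
then `Lu` is `(1-2s)`-Hölder continuous: `|Lu(x₁) - Lu(x₂)| ≤ C M |x₁-x₂|^{1-2s}`,
with `C` depending only on `n`, `s` and `Λ`. -/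
theorem stmt5 (n : ℕ) (s lam Lam : ℝ) (hs : s ∈ Ioo (0 : ℝ) (1/2))
    (hlam : 0 < lam) (hll : lam ≤ Lam) :
    ∃ C : ℝ, 0 < C ∧
      ∀ K : Rn n → ℝ, IsKernel n s lam Lam K →
      ∀ (u : Rn n → ℝ) (M B : ℝ),
        (∀ x, |u x| ≤ B) →
        (∀ x y, |u x - u y| ≤ M * ‖x - y‖) →
        ∀ x₁ x₂ : Rn n,
          |Lop K u x₁ - Lop K u x₂| ≤ C * M * ‖x₁ - x₂‖ ^ (1 - 2 * s) := by
  have hC := holderConst_nonneg (n := n) (s := s) (hlam.trans_le hll).le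
  refine ⟨holderConst n s Lam + 1, by linarith, fun K hK u M B hB hM x₁ x₂ ↦ ?_⟩
  obtain ⟨hKm, hK0, -, hKbounds⟩ := hK
  obtain rfl | hx := eq_or_ne x₁ x₂
  · rw [sub_self, sub_self, abs_zero, norm_zero, Real.zero_rpow (by linarith [hs.2]), mul_zero]
  have hM0 : 0 ≤ M := nonneg_of_mul_nonneg_left ((abs_nonneg _).trans (hM x₁ x₂))
    (norm_pos_iff.2 (sub_ne_zero.2 hx))
  calc |Lop K u x₁ - Lop K u x₂| ≤ holderConst n s Lam * M * ‖x₁ - x₂‖ ^ (1 - 2 * s) :=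
        abs_Lop_sub_Lop_le hs hKm hK0 (fun y hy ↦ (hKbounds y hy).2) hM hB hx
    _ ≤ (holderConst n s Lam + 1) * M * ‖x₁ - x₂‖ ^ (1 - 2 * s) := by gcongr; linarith

end
end

section
/- Let α ∈ (0,1), let Γ : ℝ^n → ℝ be differentiable in a neighbourhood of x₀ with ∇Γ α-Hölder continuous there, and set t₀ = Γ(x₀), a = ∇Γ(x₀). Let v be a nonnegative function defined in a neighbourhood of (x₀,t₀) in ℝ^n × ℝ such that: v = 0 and ∂_t v = 0 at all points (x,t) with t ≤ Γ(x); v is continuously differentiable in t; and on the region {t ≥ Γ(x)} the functions ∂_t v, ∇_x ∂_t v and ∂_{tt} v exist and are α-Hölder continuous in (x,t). Set c₀ = ∂_{tt} v(x₀,t₀). Then, as (x,t) → (0,0): ∂_t v(x₀+x, t₀+t) = c₀ (t − a·x)_+ + O(|t|^{1+α} + |x|^{1+α}) and v(x₀+x, t₀+t) = (c₀/2)(t − a·x)_+² + O(|t|^{2+α} + |x|^{2+α}). -/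
/-!
Write `b = Γ(x₀+x) - t₀`. Along the fibre `s ↦ v(x₀+x, s)` both `v` and `∂ₜv` vanish at the free
boundary `s = t₀ + b`, and between `t₀ + b` and `t₀ + t` the Hölder bound keeps `∂ₜₜv` within
`|Cv| L^α` of `c₀`, where `L ≍ |t| + |x|`. Integrating twice from the free boundary gives the
expansion with `(t - b)₊` in place of `(t - a·x)₊`; below the free boundary it holds trivially since
everything vanishes. The Hölder continuity of `∇Γ` gives `|b - a·x| ≤ |CΓ| |x|^{1+α}`, and this is
exactly the error made by exchanging the two positive parts.
-/

open MeasureTheory Set Metric RealInnerProductSpace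

noncomputable section

/-- The region `{t ≥ Γ(x)}` inside the `ρ`-neighbourhood of `(x₀, Γ(x₀))`. -/
def Reg {n : ℕ} (Γ : Rn n → ℝ) (x0 : Rn n) (ρ : ℝ) : Set (Rn n × ℝ) :=
  {p : Rn n × ℝ | ‖p.1 - x0‖ < ρ ∧ |p.2 - Γ x0| < ρ ∧ Γ p.1 ≤ p.2}

theorem Real.add_rpow_le_two_rpow_mul_rpow_add_rpow {a b p : ℝ} (ha : 0 ≤ a) (hb : 0 ≤ b)
    (hp : 0 ≤ p) : (a + b) ^ p ≤ 2 ^ p * (a ^ p + b ^ p) := calc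
  (a + b) ^ p ≤ (2 * max a b) ^ p := by
    rw [two_mul]; gcongr <;> simp
  _ = 2 ^ p * max a b ^ p := Real.mul_rpow zero_le_two (le_max_of_le_left ha)
  _ = 2 ^ p * max (a ^ p) (b ^ p) := by
    rcases le_total a b with h | h
    · rw [max_eq_right h, max_eq_right (Real.rpow_le_rpow ha h hp)]
    · rw [max_eq_left h, max_eq_left (Real.rpow_le_rpow hb h hp)]
  _ ≤ 2 ^ p * (a ^ p + b ^ p) := by
    gcongr; exact max_le_add_of_nonneg (by positivity) (by positivity)

theorem mul_rpow_mul_add_le {A K a b p q : ℝ} (hA : 0 ≤ A) (hK : 0 ≤ K) (ha : 0 ≤ a)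
    (hb : 0 ≤ b) (hp : 0 ≤ p) (hpq : p ≤ q) :
    A * ((K + 1) * (a + b)) ^ p ≤ (A + 1) * (2 * K + 2) ^ q * (a ^ p + b ^ p) := calc
  A * ((K + 1) * (a + b)) ^ p = A * (K + 1) ^ p * (a + b) ^ p := by
    rw [Real.mul_rpow (by positivity) (by positivity), mul_assoc]
  _ ≤ A * (K + 1) ^ p * (2 ^ p * (a ^ p + b ^ p)) := by
    gcongr; exact Real.add_rpow_le_two_rpow_mul_rpow_add_rpow ha hb hp
  _ = A * (2 * K + 2) ^ p * (a ^ p + b ^ p) := by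
    rw [show 2 * K + 2 = (K + 1) * 2 by ring, Real.mul_rpow (by positivity) zero_le_two]; ring
  _ ≤ (A + 1) * (2 * K + 2) ^ q * (a ^ p + b ^ p) := by
    have := Real.rpow_le_rpow_of_exponent_le (by linarith : 1 ≤ 2 * K + 2) hpq
    gcongr
    linarith

theorem abs_sub_inner_gradient_le {E : Type*} [NormedAddCommGroup E] [InnerProductSpace ℝ E]
    [CompleteSpace E] {f : E → ℝ} {x₀ h : E} {ρ C α : ℝ} (hα : 0 ≤ α)
    (hf : ∀ x ∈ ball x₀ ρ, DifferentiableAt ℝ f x)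
    (hhold : ∀ x ∈ ball x₀ ρ, ‖gradient f x - gradient f x₀‖ ≤ C * ‖x - x₀‖ ^ α)
    (hh : ‖h‖ < ρ) :
    |f (x₀ + h) - f x₀ - ⟪gradient f x₀, h⟫| ≤ |C| * ‖h‖ ^ (1 + α) := by
  have hsub : closedBall x₀ ‖h‖ ⊆ ball x₀ ρ := closedBall_subset_ball hh
  have bound : ∀ x ∈ closedBall x₀ ‖h‖, ‖fderiv ℝ f x - fderiv ℝ f x₀‖ ≤ |C| * ‖h‖ ^ α := by
    intro x hx
    calc ‖fderiv ℝ f x - fderiv ℝ f x₀‖ = ‖gradient f x - gradient f x₀‖ := by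
          rw [gradient, gradient, ← map_sub, LinearIsometryEquiv.norm_map]
      _ ≤ C * ‖x - x₀‖ ^ α := hhold x (hsub hx)
      _ ≤ |C| * ‖h‖ ^ α := by
        rw [mem_closedBall, dist_eq_norm] at hx
        gcongr ?_ * ?_
        · exact le_abs_self C
        · exact Real.rpow_le_rpow (norm_nonneg _) hx hα
  have hmvt := (convex_closedBall x₀ ‖h‖).norm_image_sub_le_of_norm_fderiv_le'
    (fun x hx => hf x (hsub hx)) bound (mem_closedBall_self (norm_nonneg h))
    (by simp [mem_closedBall, dist_eq_norm] : x₀ + h ∈ closedBall x₀ ‖h‖)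
  rw [add_comm 1 α, Real.rpow_add_one' (norm_nonneg h) (by linarith), ← mul_assoc]
  simpa [gradient, InnerProductSpace.toDual_symm_apply] using hmvt

theorem abs_sub_sub_mul_le_of_abs_deriv_sub_le {g g' : ℝ → ℝ} {a b c M : ℝ}
    (hg : ∀ s ∈ Icc a b, HasDerivWithinAt g (g' s) (Icc a b) s)
    (hM : ∀ s ∈ Ico a b, |g' s - c| ≤ M) :
    ∀ s ∈ Icc a b, |g s - g a - c * (s - a)| ≤ M * (s - a) := by
  have hlin : ∀ s ∈ Icc a b,
      HasDerivWithinAt (fun s => g s - c * (s - a)) (g' s - c) (Icc a b) s := fun s hs =>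
    (hg s hs).sub (((hasDerivWithinAt_id s _).sub_const a).const_mul c |>.congr_deriv (mul_one c))
  intro s hs
  have := norm_image_sub_le_of_norm_deriv_le_segment' hlin hM s hs
  simp only [sub_self, mul_zero, sub_zero, Real.norm_eq_abs] at this
  rwa [sub_right_comm]

theorem abs_sub_sq_le_of_abs_deriv_deriv_sub_le {w : ℝ → ℝ} {a b c M : ℝ} (hab : a ≤ b)
    (hw : ∀ s ∈ Icc a b, DifferentiableAt ℝ w s)
    (hw' : ∀ s ∈ Icc a b, DifferentiableAt ℝ (deriv w) s)
    (ha : w a = 0) (ha' : deriv w a = 0) (hM : ∀ s ∈ Icc a b, |deriv (deriv w) s - c| ≤ M) :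
    |deriv w b - c * (b - a)| ≤ M * (b - a) ∧ |w b - c / 2 * (b - a) ^ 2| ≤ M * (b - a) ^ 2 := by
  have hb : b ∈ Icc a b := ⟨hab, le_rfl⟩
  have hM0 : 0 ≤ M := (abs_nonneg _).trans (hM a ⟨le_rfl, hab⟩)
  have first : ∀ s ∈ Icc a b, |deriv w s - c * (s - a)| ≤ M * (s - a) := by
    simpa only [ha', sub_zero] using abs_sub_sub_mul_le_of_abs_deriv_sub_le
      (fun s hs => (hw' s hs).hasDerivAt.hasDerivWithinAt)
      (fun s hs => hM s (Ico_subset_Icc_self hs))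
  refine ⟨first b hb, ?_⟩
  have hquad : ∀ s, HasDerivAt (fun s => c / 2 * (s - a) ^ 2) (c * (s - a)) s := fun s => by
    refine ((((hasDerivAt_id' s).sub_const a).fun_pow 2).const_mul (c / 2)).congr_deriv ?_
    push_cast; ring
  have second := norm_image_sub_le_of_norm_deriv_le_segment'
    (f := fun s => w s - c / 2 * (s - a) ^ 2) (C := M * (b - a))
    (fun s hs => ((hw s hs).hasDerivAt.sub (hquad s)).hasDerivWithinAt)
    (fun s hs => (first s (Ico_subset_Icc_self hs)).trans
      (mul_le_mul_of_nonneg_left (by linarith [hs.2]) hM0)) b hb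
  simp only [sub_self, ha, Real.norm_eq_abs] at second
  simpa [sq, mul_assoc] using second

theorem abs_sub_mul_le_of_abs_sub_mul_le {c d w P Q M B G L α : ℝ} (hα : 0 ≤ α)
    (hP : 0 ≤ P) (hPL : P ≤ L) (hQ : 0 ≤ Q) (hQL : Q ≤ L) (hM₀ : 0 ≤ M) (hM : M ≤ B * L ^ α)
    (hPQ : |P - Q| ≤ G * L ^ (1 + α))
    (hd : |d - c * P| ≤ M * P) (hw : |w - c / 2 * P ^ 2| ≤ M * P ^ 2) :
    |d - c * Q| ≤ (B + |c| * G) * L ^ (1 + α) ∧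
      |w - c / 2 * Q ^ 2| ≤ (B + |c| * G) * L ^ (2 + α) := by
  have hL : 0 ≤ L := hP.trans hPL
  have hL₁ : L ^ (1 + α) = L ^ α * L := by
    rw [add_comm, Real.rpow_add_one' hL (by linarith)]
  have hL₂ : L ^ (2 + α) = L ^ (1 + α) * L := by
    rw [show 2 + α = (1 + α) + 1 by ring, Real.rpow_add_one' hL (by linarith)]
  have hMP : M * P ≤ B * L ^ (1 + α) := by
    rw [hL₁, ← mul_assoc]; exact mul_le_mul hM hPL hP (hM₀.trans hM)
  have hcPQ : |c| * |P - Q| ≤ |c| * G * L ^ (1 + α) := by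
    rw [mul_assoc]; exact mul_le_mul_of_nonneg_left hPQ (abs_nonneg c)
  constructor
  · calc |d - c * Q| = |(d - c * P) + c * (P - Q)| := by ring_nf
      _ ≤ |d - c * P| + |c| * |P - Q| := (abs_add_le _ _).trans_eq (by rw [abs_mul])
      _ ≤ (B + |c| * G) * L ^ (1 + α) := by linarith
  · have hsq : |P ^ 2 - Q ^ 2| ≤ |P - Q| * (2 * L) := by
      rw [show P ^ 2 - Q ^ 2 = (P - Q) * (P + Q) by ring, abs_mul,
        abs_of_nonneg (add_nonneg hP hQ)]
      exact mul_le_mul_of_nonneg_left (by linarith) (abs_nonneg _)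
    have hMP₂ : M * P ^ 2 ≤ B * L ^ (1 + α) * L := by
      rw [sq, ← mul_assoc]
      exact mul_le_mul hMP hPL hP ((mul_nonneg hM₀ hP).trans hMP)
    calc |w - c / 2 * Q ^ 2| = |(w - c / 2 * P ^ 2) + c / 2 * (P ^ 2 - Q ^ 2)| := by ring_nf
      _ ≤ |w - c / 2 * P ^ 2| + |c| / 2 * |P ^ 2 - Q ^ 2| :=
        (abs_add_le _ _).trans_eq (by rw [abs_mul, abs_div, abs_two])
      _ ≤ B * L ^ (1 + α) * L + |c| / 2 * (|P - Q| * (2 * L)) := by gcongr; linarith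
      _ ≤ B * L ^ (1 + α) * L + |c| * G * L ^ (1 + α) * L := by
        rw [show |c| / 2 * (|P - Q| * (2 * L)) = |c| * |P - Q| * L by ring]
        gcongr
      _ = (B + |c| * G) * L ^ (2 + α) := by rw [hL₂]; ring

theorem expansion_along_fiber {n : ℕ} {α ρ c₀ Cv t : ℝ} {Γ : Rn n → ℝ} {x₀ x : Rn n}
    {v : Rn n → ℝ → ℝ} (hα : 0 ≤ α)
    (hzero : ∀ (x : Rn n) (t : ℝ), ‖x - x₀‖ < ρ → |t - Γ x₀| < ρ → t ≤ Γ x →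
      v x t = 0 ∧ deriv (v x) t = 0)
    (hdiff : ∀ (x : Rn n), ‖x - x₀‖ < ρ → ∀ t : ℝ, |t - Γ x₀| < ρ →
      DifferentiableAt ℝ (v x) t)
    (hreg : ∀ p ∈ Reg Γ x₀ ρ, DifferentiableAt ℝ (deriv (v p.1)) p.2)
    (hhold : ∀ p ∈ Reg Γ x₀ ρ,
      |deriv (deriv (v p.1)) p.2 - c₀| ≤ Cv * (‖p.1 - x₀‖ + |p.2 - Γ x₀|) ^ α)
    (hx : ‖x‖ < ρ) (ht : |t| < ρ) (hΓ : |Γ (x₀ + x) - Γ x₀| < ρ) :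
    |deriv (v (x₀ + x)) (Γ x₀ + t) - c₀ * max (Γ x₀ + t - Γ (x₀ + x)) 0|
        ≤ |Cv| * (‖x‖ + |t| + |Γ (x₀ + x) - Γ x₀|) ^ α * max (Γ x₀ + t - Γ (x₀ + x)) 0 ∧
      |v (x₀ + x) (Γ x₀ + t) - c₀ / 2 * max (Γ x₀ + t - Γ (x₀ + x)) 0 ^ 2|
        ≤ |Cv| * (‖x‖ + |t| + |Γ (x₀ + x) - Γ x₀|) ^ α * max (Γ x₀ + t - Γ (x₀ + x)) 0 ^ 2 := by
  have hx' : ‖x₀ + x - x₀‖ < ρ := by simpa using hx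
  rcases le_total (Γ x₀ + t) (Γ (x₀ + x)) with hbelow | habove
  · obtain ⟨h0, h0'⟩ := hzero _ _ hx' (by simpa using ht) hbelow
    simp [h0, h0', max_eq_right (sub_nonpos.2 hbelow)]
  have hmem : ∀ s ∈ Icc (Γ (x₀ + x)) (Γ x₀ + t), (x₀ + x, s) ∈ Reg Γ x₀ ρ := fun s hs =>
    ⟨hx', abs_lt.2 ⟨by linarith [(abs_lt.1 hΓ).1, hs.1], by linarith [(abs_lt.1 ht).2, hs.2]⟩,
      hs.1⟩
  obtain ⟨h0, h0'⟩ := hzero _ _ hx' hΓ le_rfl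
  rw [max_eq_left (sub_nonneg.2 habove)]
  refine abs_sub_sq_le_of_abs_deriv_deriv_sub_le habove
    (fun s hs => hdiff _ hx' s (hmem s hs).2.1) (fun s hs => hreg _ (hmem s hs)) h0 h0'
    fun s hs => (hhold _ (hmem s hs)).trans ?_
  have hsΓ : |s - Γ x₀| ≤ |t| + |Γ (x₀ + x) - Γ x₀| := by
    rw [abs_le]
    constructor <;> linarith [hs.1, hs.2, le_abs_self t, abs_nonneg t,
      neg_abs_le (Γ (x₀ + x) - Γ x₀), abs_nonneg (Γ (x₀ + x) - Γ x₀)]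
  rw [add_sub_cancel_left, add_assoc]
  gcongr ?_ * ?_
  · exact le_abs_self Cv
  · exact Real.rpow_le_rpow (by positivity) (by linarith) hα

theorem expansion_error_le {n : ℕ} {α ρ r CΓ Cv c₀ t : ℝ} {Γ : Rn n → ℝ} {x₀ x : Rn n}
    {v : Rn n → ℝ → ℝ} (hα : 0 ≤ α)
    (hΓdiff : ∀ x ∈ ball x₀ ρ, DifferentiableAt ℝ Γ x)
    (hΓhold : ∀ x ∈ ball x₀ ρ, ‖gradient Γ x - gradient Γ x₀‖ ≤ CΓ * ‖x - x₀‖ ^ α)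
    (hzero : ∀ (x : Rn n) (t : ℝ), ‖x - x₀‖ < ρ → |t - Γ x₀| < ρ → t ≤ Γ x →
      v x t = 0 ∧ deriv (v x) t = 0)
    (hdiff : ∀ (x : Rn n), ‖x - x₀‖ < ρ → ∀ t : ℝ, |t - Γ x₀| < ρ →
      DifferentiableAt ℝ (v x) t)
    (hreg : ∀ p ∈ Reg Γ x₀ ρ, DifferentiableAt ℝ (deriv (v p.1)) p.2)
    (hhold : ∀ p ∈ Reg Γ x₀ ρ,
      |deriv (deriv (v p.1)) p.2 - c₀| ≤ Cv * (‖p.1 - x₀‖ + |p.2 - Γ x₀|) ^ α)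
    (hr₁ : r ≤ 1) (hr : (‖gradient Γ x₀‖ + |CΓ| + 1) * r < ρ) (hx : ‖x‖ ≤ r) (ht : |t| ≤ r) :
    |deriv (v (x₀ + x)) (Γ x₀ + t) - c₀ * max (t - ⟪gradient Γ x₀, x⟫) 0|
        ≤ (|Cv| + |c₀| * |CΓ|) * ((‖gradient Γ x₀‖ + |CΓ| + 1) * (|t| + ‖x‖)) ^ (1 + α) ∧
      |v (x₀ + x) (Γ x₀ + t) - c₀ / 2 * max (t - ⟪gradient Γ x₀, x⟫) 0 ^ 2|
        ≤ (|Cv| + |c₀| * |CΓ|) * ((‖gradient Γ x₀‖ + |CΓ| + 1) * (|t| + ‖x‖)) ^ (2 + α) := by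
  set a := gradient Γ x₀
  set K := ‖a‖ + |CΓ|
  set L := (K + 1) * (|t| + ‖x‖)
  have hK : 0 ≤ K := by positivity
  have hKr : K * ‖x‖ ≤ K * r := mul_le_mul_of_nonneg_left hx hK
  have hr' : K * r + r < ρ := by linarith [add_mul K 1 r, mul_nonneg hK (norm_nonneg x)]
  have hxρ : ‖x‖ < ρ := by linarith [mul_nonneg hK (norm_nonneg x)]
  have htρ : |t| < ρ := by linarith [mul_nonneg hK (norm_nonneg x)]
  have hL : |t| + K * ‖x‖ + ‖x‖ ≤ L := by
    linarith [show L = K * |t| + |t| + K * ‖x‖ + ‖x‖ by ring, mul_nonneg hK (abs_nonneg t)]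
  have hTaylor := abs_sub_inner_gradient_le hα hΓdiff hΓhold hxρ
  have hinner := abs_real_inner_le_norm a x
  have hΓ : |Γ (x₀ + x) - Γ x₀| ≤ K * ‖x‖ := by
    have hpow : |CΓ| * ‖x‖ ^ (1 + α) ≤ |CΓ| * ‖x‖ := mul_le_mul_of_nonneg_left
      (Real.rpow_le_self_of_le_one (norm_nonneg x) (hx.trans hr₁) (by linarith)) (abs_nonneg _)
    have := abs_sub_abs_le_abs_sub (Γ (x₀ + x) - Γ x₀) ⟪a, x⟫
    linarith
  obtain ⟨hd, hw⟩ := expansion_along_fiber hα hzero hdiff hreg hhold hxρ htρ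
    (by linarith [norm_nonneg x])
  have hxL : ‖x‖ ≤ L := by linarith [abs_nonneg t, mul_nonneg hK (norm_nonneg x)]
  refine abs_sub_mul_le_of_abs_sub_mul_le hα (le_max_right _ _) ?_ (le_max_right _ _) ?_
    (by positivity) ?_ ?_ hd hw
  · refine max_le ?_ (by positivity)
    linarith [le_abs_self t, neg_abs_le (Γ (x₀ + x) - Γ x₀), norm_nonneg x]
  · refine max_le ?_ (by positivity)
    linarith [le_abs_self t, neg_abs_le ⟪a, x⟫, mul_nonneg (abs_nonneg CΓ) (norm_nonneg x),
      norm_nonneg x, add_mul ‖a‖ |CΓ| ‖x‖]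
  · gcongr; linarith
  · calc |max (Γ x₀ + t - Γ (x₀ + x)) 0 - max (t - ⟪a, x⟫) 0|
        ≤ |Γ (x₀ + x) - Γ x₀ - ⟪a, x⟫| := by
          refine (abs_max_sub_max_le_abs _ _ _).trans_eq ?_
          rw [abs_sub_comm]; ring_nf
      _ ≤ |CΓ| * ‖x‖ ^ (1 + α) := hTaylor
      _ ≤ |CΓ| * L ^ (1 + α) := by gcongr

theorem stmt13_general (n : ℕ) (α : ℝ) (hα : α ∈ Ioo (0 : ℝ) 1)
    (Γ : Rn n → ℝ) (x0 : Rn n) (ρ CΓ Cv : ℝ) (hρ : 0 < ρ)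
    -- Γ differentiable near x₀ with α-Hölder gradient
    (hΓdiff : ∀ x ∈ ball x0 ρ, DifferentiableAt ℝ Γ x)
    (hΓhold : ∀ x ∈ ball x0 ρ, ∀ y ∈ ball x0 ρ,
      ‖gradient Γ x - gradient Γ y‖ ≤ CΓ * ‖x - y‖ ^ α)
    (v : Rn n → ℝ → ℝ)
    -- v = 0 and ∂ₜv = 0 below the graph of Γ
    (hzero : ∀ (x : Rn n) (t : ℝ), ‖x - x0‖ < ρ → |t - Γ x0| < ρ → t ≤ Γ x →
      v x t = 0 ∧ deriv (v x) t = 0)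
    -- v continuously differentiable in t
    (hdiff : ∀ (x : Rn n), ‖x - x0‖ < ρ → ∀ t : ℝ, |t - Γ x0| < ρ →
      DifferentiableAt ℝ (v x) t)
    -- on {t ≥ Γ(x)}: ∂ₜv, ∇ₓ∂ₜv, ∂ₜₜv exist and are α-Hölder
    (hreg : ∀ p ∈ Reg Γ x0 ρ,
      DifferentiableAt ℝ (fun y : Rn n => deriv (v y) p.2) p.1 ∧
      DifferentiableAt ℝ (deriv (v p.1)) p.2)
    (hhold : ∀ p ∈ Reg Γ x0 ρ, ∀ q ∈ Reg Γ x0 ρ,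
      |deriv (v p.1) p.2 - deriv (v q.1) q.2|
          ≤ Cv * (‖p.1 - q.1‖ + |p.2 - q.2|) ^ α ∧
      ‖gradient (fun y : Rn n => deriv (v y) p.2) p.1
          - gradient (fun y : Rn n => deriv (v y) q.2) q.1‖
          ≤ Cv * (‖p.1 - q.1‖ + |p.2 - q.2|) ^ α ∧
      |deriv (deriv (v p.1)) p.2 - deriv (deriv (v q.1)) q.2|
          ≤ Cv * (‖p.1 - q.1‖ + |p.2 - q.2|) ^ α) :
    ∃ C' : ℝ, 0 < C' ∧ ∃ r : ℝ, 0 < r ∧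
      ∀ (x : Rn n) (t : ℝ), ‖x‖ ≤ r → |t| ≤ r →
        |deriv (v (x0 + x)) (Γ x0 + t)
            - deriv (deriv (v x0)) (Γ x0) * max (t - ⟪gradient Γ x0, x⟫) 0|
          ≤ C' * (|t| ^ (1 + α) + ‖x‖ ^ (1 + α)) ∧
        |v (x0 + x) (Γ x0 + t)
            - deriv (deriv (v x0)) (Γ x0) / 2 * (max (t - ⟪gradient Γ x0, x⟫) 0) ^ 2|
          ≤ C' * (|t| ^ (2 + α) + ‖x‖ ^ (2 + α)) := by
  set K := ‖gradient Γ x0‖ + |CΓ|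
  set A := |Cv| + |deriv (deriv (v x0)) (Γ x0)| * |CΓ|
  have hK : 0 ≤ K := by positivity
  have hA : 0 ≤ A := by positivity
  have hbase : (x0, Γ x0) ∈ Reg Γ x0 ρ := ⟨by simpa using hρ, by simpa using hρ, le_rfl⟩
  obtain ⟨δ, hδ, hKδ⟩ := exists_pos_mul_lt hρ (K + 1)
  refine ⟨(A + 1) * (2 * K + 2) ^ (2 + α), by positivity, min 1 δ, lt_min one_pos hδ,
    fun x t hx ht => ?_⟩
  obtain ⟨hd, hw⟩ := expansion_error_le hα.1.le hΓdiff
    (fun x hx => hΓhold x hx x0 (mem_ball_self hρ)) hzero hdiff (fun p hp => (hreg p hp).2)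
    (fun p hp => by simpa using (hhold p hp _ hbase).2.2) (min_le_left 1 δ)
    ((mul_le_mul_of_nonneg_left (min_le_right 1 δ) (by positivity)).trans_lt hKδ) hx ht
  exact ⟨hd.trans (mul_rpow_mul_add_le hA hK (abs_nonneg t) (norm_nonneg x)
      (by linarith [hα.1]) (by linarith)),
    hw.trans (mul_rpow_mul_add_le hA hK (abs_nonneg t) (norm_nonneg x)
      (by linarith [hα.1]) le_rfl)⟩

/-- expansion at a free boundary point: with `t₀ = Γ(x₀)`,
`a = ∇Γ(x₀)` and `c₀ = ∂ₜₜv(x₀,t₀)`, one has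
`∂ₜv(x₀+x, t₀+t) = c₀ (t - a·x)₊ + O(|t|^{1+α} + |x|^{1+α})` and
`v(x₀+x, t₀+t) = (c₀/2)(t - a·x)₊² + O(|t|^{2+α} + |x|^{2+α})`. -/
theorem stmt13 (n : ℕ) (α : ℝ) (hα : α ∈ Ioo (0 : ℝ) 1)
    (Γ : Rn n → ℝ) (x0 : Rn n) (ρ CΓ Cv : ℝ) (hρ : 0 < ρ)
    -- Γ differentiable near x₀ with α-Hölder gradient
    (hΓdiff : ∀ x ∈ ball x0 ρ, DifferentiableAt ℝ Γ x)
    (hΓhold : ∀ x ∈ ball x0 ρ, ∀ y ∈ ball x0 ρ,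
      ‖gradient Γ x - gradient Γ y‖ ≤ CΓ * ‖x - y‖ ^ α)
    (v : Rn n → ℝ → ℝ)
    -- v nonnegative in a neighbourhood of (x₀, Γ(x₀))
    (hv0 : ∀ (x : Rn n) (t : ℝ), ‖x - x0‖ < ρ → |t - Γ x0| < ρ → 0 ≤ v x t)
    -- v = 0 and ∂ₜv = 0 below the graph of Γ
    (hzero : ∀ (x : Rn n) (t : ℝ), ‖x - x0‖ < ρ → |t - Γ x0| < ρ → t ≤ Γ x →
      v x t = 0 ∧ deriv (v x) t = 0)
    -- v continuously differentiable in t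
    (hdiff : ∀ (x : Rn n), ‖x - x0‖ < ρ → ∀ t : ℝ, |t - Γ x0| < ρ →
      DifferentiableAt ℝ (v x) t)
    (hcont : ∀ (x : Rn n), ‖x - x0‖ < ρ →
      ContinuousOn (deriv (v x)) (Ioo (Γ x0 - ρ) (Γ x0 + ρ)))
    -- on {t ≥ Γ(x)}: ∂ₜv, ∇ₓ∂ₜv, ∂ₜₜv exist and are α-Hölder
    (hreg : ∀ p ∈ Reg Γ x0 ρ,
      DifferentiableAt ℝ (fun y : Rn n => deriv (v y) p.2) p.1 ∧
      DifferentiableAt ℝ (deriv (v p.1)) p.2)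
    (hhold : ∀ p ∈ Reg Γ x0 ρ, ∀ q ∈ Reg Γ x0 ρ,
      |deriv (v p.1) p.2 - deriv (v q.1) q.2|
          ≤ Cv * (‖p.1 - q.1‖ + |p.2 - q.2|) ^ α ∧
      ‖gradient (fun y : Rn n => deriv (v y) p.2) p.1
          - gradient (fun y : Rn n => deriv (v y) q.2) q.1‖
          ≤ Cv * (‖p.1 - q.1‖ + |p.2 - q.2|) ^ α ∧
      |deriv (deriv (v p.1)) p.2 - deriv (deriv (v q.1)) q.2|
          ≤ Cv * (‖p.1 - q.1‖ + |p.2 - q.2|) ^ α) :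
    ∃ C' : ℝ, 0 < C' ∧ ∃ r : ℝ, 0 < r ∧
      ∀ (x : Rn n) (t : ℝ), ‖x‖ ≤ r → |t| ≤ r →
        |deriv (v (x0 + x)) (Γ x0 + t)
            - deriv (deriv (v x0)) (Γ x0) * max (t - ⟪gradient Γ x0, x⟫) 0|
          ≤ C' * (|t| ^ (1 + α) + ‖x‖ ^ (1 + α)) ∧
        |v (x0 + x) (Γ x0 + t)
            - deriv (deriv (v x0)) (Γ x0) / 2 * (max (t - ⟪gradient Γ x0, x⟫) 0) ^ 2|
          ≤ C' * (|t| ^ (2 + α) + ‖x‖ ^ (2 + α)) :=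
  stmt13_general n α hα Γ x0 ρ CΓ Cv hρ hΓdiff hΓhold v hzero hdiff hreg hhold

end
end

section
/- Let ε > 0, T > 0, and set β_ε(z) = e^{−z/ε}. Let φ, ψ, u₀, v₀ : ℝ^n → ℝ and f, g : ℝ^n × (0,T) → ℝ be bounded and uniformly Lipschitz, and let u, v : ℝ^n × [0,T] → ℝ be bounded, uniformly Lipschitz, continuous, continuously differentiable in t on ℝ^n × (0,T), and satisfy pointwise ∂_t u + Lu = β_ε(u − φ) + f and ∂_t v + Lv = β_ε(v − ψ) + g on ℝ^n × (0,T), with u(·,0) = u₀ and v(·,0) = v₀. If u₀ ≤ v₀, φ ≤ ψ and f ≤ g, then u ≤ v on ℝ^n × (0,T). -/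
open MeasureTheory Set Metric

noncomputable section

/-- Bounded and uniformly Lipschitz function on `ℝⁿ`. -/
def BddLip {n : ℕ} (f : Rn n → ℝ) : Prop :=
  ∃ M : ℝ, (∀ x, |f x| ≤ M) ∧ ∀ x y, |f x - f y| ≤ M * ‖x - y‖

/-- Bounded and uniformly Lipschitz function on `ℝⁿ × (0,T)`. -/
def BddLipT {n : ℕ} (T : ℝ) (f : Rn n → ℝ → ℝ) : Prop :=
  ∃ M : ℝ, (∀ x t, t ∈ Ioo 0 T → |f x t| ≤ M) ∧
    ∀ (x x' : Rn n), ∀ t ∈ Ioo (0:ℝ) T, ∀ t' ∈ Ioo (0:ℝ) T,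
      |f x t - f x' t'| ≤ M * (‖x - x'‖ + |t - t'|)

/-- Bounded and uniformly Lipschitz function on `ℝⁿ × [0,T]`. -/
def BddLipIcc {n : ℕ} (T : ℝ) (f : Rn n → ℝ → ℝ) : Prop :=
  ∃ M : ℝ, (∀ x t, t ∈ Icc 0 T → |f x t| ≤ M) ∧
    ∀ (x x' : Rn n), ∀ t ∈ Icc (0:ℝ) T, ∀ t' ∈ Icc (0:ℝ) T,
      |f x t - f x' t'| ≤ M * (‖x - x'‖ + |t - t'|)

/-!
Let `w = u - v` and `m t = ⨆ x, w x t`, which is Lipschitz in `t` with `m 0 ≤ 0`. Where `m > 0`,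
take a point `x` at which `w (·, τ)` is nearly maximal: there `u > v`, so the penalty terms
(`β_ε` is decreasing and `φ ≤ ψ`) and the sources (`f ≤ g`) only help, and
`∂ₜ w ≤ -L w (x) ≤ Λ ∫ min (C|y|, η) |y|^(-n-2s) dy`, where `C` is the Lipschitz constant of
`w` and `η` the defect from maximality.
Because `2s < 1` this integral tends to `0` with `η` (dominated convergence), so the right Dini
derivative of `m` is `≤ 0` wherever `m > 0`, and a fencing argument gives `m ≤ 0`.
-/

open Filter Topology

/-- Radial profile dominating `|W x - W (x + y)| K y` for bounded Lipschitz `W`; it is integrable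
because `0 < 2s < 1`. -/
def kernelMajorant (n : ℕ) (s r : ℝ) : ℝ := min r 1 * r ^ (-(n : ℝ) - 2 * s)

section Majorant

variable {n : ℕ} {s : ℝ}

lemma kernelMajorant_nonneg {r : ℝ} (hr : 0 ≤ r) : 0 ≤ kernelMajorant n s r :=
  mul_nonneg (le_min hr zero_le_one) (Real.rpow_nonneg hr _)

lemma integrable_kernelMajorant (hs : s ∈ Ioo (0 : ℝ) (1 / 2)) :
    Integrable fun y : Rn n => kernelMajorant n s ‖y‖ := by
  rcases subsingleton_or_nontrivial (Rn n) with hn | hn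
  · have h0 : (fun y : Rn n => kernelMajorant n s ‖y‖) = 0 :=
      funext fun y => by simp [Subsingleton.elim y 0, kernelMajorant]
    rw [h0]
    exact integrable_zero _ _ _
  have hn1 : 0 < n := by
    simpa [finrank_euclideanSpace_fin] using Module.finrank_pos (R := ℝ) (M := Rn n)
  rw [integrable_fun_norm_addHaar volume, finrank_euclideanSpace_fin,
    ← Ioc_union_Ioi_eq_Ioi zero_le_one]
  have hpow : ∀ r : ℝ, 0 < r → ∀ q : ℝ, r ^ (n - 1) * r ^ q = r ^ ((n : ℝ) - 1 + q) := by
    intro r hr q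
    rw [← Real.rpow_natCast, Nat.cast_sub hn1, Nat.cast_one, ← Real.rpow_add hr]
  refine IntegrableOn.union ?_ ?_
  · have h : IntegrableOn (fun r : ℝ => r ^ (-2 * s)) (Ioc 0 1) := by
      rw [integrableOn_Ioc_iff_integrableOn_Ioo]
      exact (intervalIntegral.integrableOn_Ioo_rpow_iff one_pos).2 (by linarith [hs.2])
    refine h.congr_fun (fun r hr => ?_) measurableSet_Ioc
    rw [smul_eq_mul, kernelMajorant, min_eq_left hr.2, mul_comm r,
      ← Real.rpow_add_one hr.1.ne', hpow r hr.1]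
    ring_nf
  · have h : IntegrableOn (fun r : ℝ => r ^ (-1 - 2 * s)) (Ioi 1) :=
      integrableOn_Ioi_rpow_of_lt (by linarith [hs.1]) one_pos
    refine h.congr_fun (fun r (hr : 1 < r) => ?_) measurableSet_Ioi
    rw [smul_eq_mul, kernelMajorant, min_eq_right hr.le, one_mul, hpow r (by linarith)]
    ring_nf

lemma min_mul_le_max_mul_min {C η r : ℝ} (hr : 0 ≤ r) :
    min (C * r) η ≤ max C η * min r 1 := by
  rcases le_total r 1 with h | h
  · rw [min_eq_left h]
    exact (min_le_left _ _).trans (mul_le_mul_of_nonneg_right (le_max_left _ _) hr)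
  · rw [min_eq_right h, mul_one]
    exact (min_le_right _ _).trans (le_max_right _ _)

lemma norm_min_mul_rpow_le {C η : ℝ} (hC : 0 ≤ C) (hη : 0 ≤ η) (y : Rn n) :
    ‖min (C * ‖y‖) η * ‖y‖ ^ (-(n : ℝ) - 2 * s)‖ ≤ max C η * kernelMajorant n s ‖y‖ := by
  have hp : 0 ≤ ‖y‖ ^ (-(n : ℝ) - 2 * s) := Real.rpow_nonneg (norm_nonneg y) _
  rw [Real.norm_eq_abs, abs_of_nonneg (mul_nonneg (le_min (by positivity) hη) hp),
    kernelMajorant, ← mul_assoc]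
  exact mul_le_mul_of_nonneg_right (min_mul_le_max_mul_min (norm_nonneg y)) hp

lemma integrable_min_mul_rpow (hs : s ∈ Ioo (0 : ℝ) (1 / 2)) {C η : ℝ} (hC : 0 ≤ C)
    (hη : 0 ≤ η) :
    Integrable fun y : Rn n => min (C * ‖y‖) η * ‖y‖ ^ (-(n : ℝ) - 2 * s) :=
  ((integrable_kernelMajorant hs).const_mul (max C η)).mono'
    (Measurable.aestronglyMeasurable (by fun_prop))
    (ae_of_all _ (norm_min_mul_rpow_le hC hη))

lemma tendsto_integral_min_mul_rpow (hs : s ∈ Ioo (0 : ℝ) (1 / 2)) {C : ℝ} (hC : 0 ≤ C) :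
    Tendsto (fun η => ∫ y : Rn n, min (C * ‖y‖) η * ‖y‖ ^ (-(n : ℝ) - 2 * s))
      (𝓝[≥] 0) (𝓝 0) := by
  have hlim : ∀ y : Rn n, Tendsto (fun η => min (C * ‖y‖) η * ‖y‖ ^ (-(n : ℝ) - 2 * s))
      (𝓝[≥] 0) (𝓝 0) := by
    intro y
    have h : Continuous fun η : ℝ => min (C * ‖y‖) η * ‖y‖ ^ (-(n : ℝ) - 2 * s) := by
      fun_prop
    simpa [min_eq_right (by positivity : (0 : ℝ) ≤ C * ‖y‖)] using
      (h.tendsto 0).mono_left nhdsWithin_le_nhds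
  have hbound : ∀ᶠ η in 𝓝[≥] (0 : ℝ), ∀ᵐ y : Rn n,
      ‖min (C * ‖y‖) η * ‖y‖ ^ (-(n : ℝ) - 2 * s)‖ ≤ max C 1 * kernelMajorant n s ‖y‖ := by
    filter_upwards [Icc_mem_nhdsGE zero_lt_one] with η hη
    exact ae_of_all _ fun y => (norm_min_mul_rpow_le hC hη.1 y).trans
      (mul_le_mul_of_nonneg_right (max_le_max le_rfl hη.2)
        (kernelMajorant_nonneg (norm_nonneg y)))
  simpa using tendsto_integral_filter_of_dominated_convergence
    (F := fun η (y : Rn n) => min (C * ‖y‖) η * ‖y‖ ^ (-(n : ℝ) - 2 * s))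
    (fun y : Rn n => max C 1 * kernelMajorant n s ‖y‖)
    (Eventually.of_forall fun _ => Measurable.aestronglyMeasurable (by fun_prop)) hbound
    ((integrable_kernelMajorant hs).const_mul _) (ae_of_all _ hlim)

end Majorant

section Operator

variable {n : ℕ} {s lam Lam : ℝ} {K : Rn n → ℝ}

lemma BddLip.continuous {W : Rn n → ℝ} (hW : BddLip W) : Continuous W := by
  obtain ⟨M, -, hMl⟩ := hW
  refine (LipschitzWith.of_dist_le_mul (K := M.toNNReal) fun a b => ?_).continuous
  rw [Real.dist_eq, dist_eq_norm]
  exact (hMl a b).trans (mul_le_mul_of_nonneg_right (M.le_coe_toNNReal) (norm_nonneg _))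

lemma BddLip.integrable_Lop_integrand {W : Rn n → ℝ} (hW : BddLip W)
    (hs : s ∈ Ioo (0 : ℝ) (1 / 2)) (hK : IsKernel n s lam Lam K) (x : Rn n) :
    Integrable fun y => (W x - W (x + y)) * K y := by
  obtain ⟨hKm, hK0, -, hKb⟩ := hK
  have hWc := hW.continuous
  obtain ⟨M, hMb, hMl⟩ := hW
  have hM : 0 ≤ M := (abs_nonneg _).trans (hMb 0)
  refine ((integrable_kernelMajorant hs).const_mul (2 * M * |Lam|)).mono'
    ((by fun_prop : Continuous fun y => W x - W (x + y)).aestronglyMeasurable.mul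
      hKm.aestronglyMeasurable) (ae_of_all _ fun y => ?_)
  rcases eq_or_ne y 0 with rfl | hy
  · simpa using mul_nonneg (by positivity) (kernelMajorant_nonneg le_rfl)
  have hdiff : |W x - W (x + y)| ≤ 2 * M * min ‖y‖ 1 := by
    rw [mul_min_of_nonneg _ _ (by positivity), mul_one]
    refine le_min ?_ ?_
    · have h := hMl x (x + y)
      rw [sub_add_cancel_left, norm_neg] at h
      nlinarith [norm_nonneg y]
    · linarith [abs_sub (W x) (W (x + y)), hMb x, hMb (x + y)]
  have hKy : K y ≤ |Lam| * ‖y‖ ^ (-(n : ℝ) - 2 * s) :=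
    (hKb y hy).2.trans
      (mul_le_mul_of_nonneg_right (le_abs_self _) (Real.rpow_nonneg (norm_nonneg y) _))
  rw [Real.norm_eq_abs, abs_mul, abs_of_nonneg (hK0 y), kernelMajorant]
  calc |W x - W (x + y)| * K y
      ≤ (2 * M * min ‖y‖ 1) * (|Lam| * ‖y‖ ^ (-(n : ℝ) - 2 * s)) :=
        mul_le_mul hdiff hKy (hK0 y) (by positivity)
    _ = 2 * M * |Lam| * (min ‖y‖ 1 * ‖y‖ ^ (-(n : ℝ) - 2 * s)) := by ring

lemma Lop_sub {W₁ W₂ : Rn n → ℝ} {x : Rn n}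
    (h₁ : Integrable fun y => (W₁ x - W₁ (x + y)) * K y)
    (h₂ : Integrable fun y => (W₂ x - W₂ (x + y)) * K y) :
    Lop K (fun y => W₁ y - W₂ y) x = Lop K W₁ x - Lop K W₂ x := by
  rw [Lop, Lop, Lop, ← integral_sub h₁ h₂]
  congr 1 with y
  ring

lemma neg_Lop_le_of_sub_le_min (hs : s ∈ Ioo (0 : ℝ) (1 / 2)) (hK : IsKernel n s lam Lam K)
    {W : Rn n → ℝ} {x : Rn n} (hint : Integrable fun y => (W x - W (x + y)) * K y)
    {C η : ℝ} (hC : 0 ≤ C) (hη : 0 ≤ η) (hW : ∀ y, W (x + y) - W x ≤ min (C * ‖y‖) η) :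
    -Lop K W x ≤ Lam * ∫ y : Rn n, min (C * ‖y‖) η * ‖y‖ ^ (-(n : ℝ) - 2 * s) := by
  obtain ⟨-, hK0, -, hKb⟩ := hK
  rw [Lop, ← integral_neg, ← integral_const_mul]
  refine integral_mono hint.neg ((integrable_min_mul_rpow hs hC hη).const_mul Lam) fun y => ?_
  rcases eq_or_ne y 0 with rfl | hy
  · simp [min_eq_left hη]
  calc -((W x - W (x + y)) * K y) = (W (x + y) - W x) * K y := by ring
    _ ≤ min (C * ‖y‖) η * K y := mul_le_mul_of_nonneg_right (hW y) (hK0 y)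
    _ ≤ min (C * ‖y‖) η * (Lam * ‖y‖ ^ (-(n : ℝ) - 2 * s)) :=
      mul_le_mul_of_nonneg_left (hKb y hy).2 (le_min (by positivity) hη)
    _ = Lam * (min (C * ‖y‖) η * ‖y‖ ^ (-(n : ℝ) - 2 * s)) := by ring

end Operator

lemma sub_le_neg_sub_of_penalized {ε : ℝ} (hε : 0 < ε) {du dv Lu Lv u v φ ψ f g : ℝ}
    (hu : du + Lu = Real.exp (-(u - φ) / ε) + f) (hv : dv + Lv = Real.exp (-(v - ψ) / ε) + g)
    (hφψ : φ ≤ ψ) (hfg : f ≤ g) (huv : v ≤ u) : du - dv ≤ -(Lu - Lv) := by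
  have hβ : Real.exp (-(u - φ) / ε) ≤ Real.exp (-(v - ψ) / ε) :=
    Real.exp_le_exp.2 (div_le_div_of_nonneg_right (by linarith) hε.le)
  linarith

lemma nonpos_of_frequently_slope_lt {m : ℝ → ℝ} {a b : ℝ} (hm : ContinuousOn m (Icc a b))
    (ha : m a ≤ 0)
    (hslope : ∀ z ∈ Ico a b, 0 < m z → ∀ ρ > 0, ∃ᶠ ζ in 𝓝[>] z, slope m z ζ < ρ) :
    ∀ x ∈ Icc a b, m x ≤ 0 := by
  intro x hx
  refine le_of_forall_pos_le_add fun c hc => ?_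
  rw [zero_add]
  -- `max m c` has right Dini derivative `≤ 0` everywhere, not only where `m > 0`.
  refine (le_max_left _ c).trans <| image_le_of_liminf_slope_right_le_deriv_boundary
    (f := fun σ => max (m σ) c) (hm.sup continuousOn_const) (max_le (ha.trans hc.le) le_rfl)
    continuousOn_const (fun _ _ => hasDerivWithinAt_const _ _ c) (fun z hz r hr => ?_) hx
  rcases lt_or_ge (m z) c with hzc | hzc
  · have hnear : ∀ᶠ ζ in 𝓝[>] z, m ζ < c :=
      nhdsWithin_le_of_mem (Icc_mem_nhdsGT_of_mem hz)
        ((hm z (Ico_subset_Icc_self hz)).eventually_lt continuousWithinAt_const hzc)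
    refine (hnear.mono fun ζ hζ => ?_).frequently
    simpa [slope_def_field, max_eq_right hζ.le, max_eq_right hzc.le] using hr
  · refine (hslope z hz (hc.trans_le hzc) r hr).mp
      (eventually_mem_nhdsWithin.mono fun ζ (hzζ : z < ζ) hζ => ?_)
    rw [slope_def_field, div_lt_iff₀ (sub_pos.2 hzζ)] at hζ ⊢
    rw [max_eq_left hzc, ← max_sub_sub_right]
    exact max_lt hζ (by linarith [mul_pos hr (sub_pos.2 hzζ)])

section SupremumOfFamily

variable {X : Type*} [Nonempty X] {W : X → ℝ → ℝ} {a b : ℝ} {C : NNReal}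

lemma lipschitzOnWith_iSup (hbdd : ∀ σ ∈ Icc a b, BddAbove (range fun x => W x σ))
    (hlip : ∀ x, LipschitzOnWith C (W x) (Icc a b)) :
    LipschitzOnWith C (fun σ => ⨆ x, W x σ) (Icc a b) :=
  LipschitzOnWith.of_le_add_mul C fun _ hσ σ' hσ' =>
    ciSup_le fun x => ((hlip x).le_add_mul hσ hσ').trans
      (add_le_add_left (le_ciSup (hbdd σ' hσ') x) _)

lemma slope_iSup_lt_add (hbdd : ∀ σ ∈ Icc a b, BddAbove (range fun x => W x σ))
    (hlip : ∀ x, LipschitzOnWith C (W x) (Icc a b))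
    (hdiff : ∀ x, ∀ τ ∈ Ioo a b, DifferentiableAt ℝ (W x) τ) {D : ℝ → ℝ}
    (hderiv : ∀ x, ∀ τ ∈ Ioo a b, ∀ η, 0 ≤ η → 0 < W x τ → (∀ y, W y τ ≤ W x τ + η) →
      deriv (W x) τ ≤ D η)
    {z ζ : ℝ} (hz : a ≤ z) (hzζ : z < ζ) (hζ : ζ ≤ b)
    (hpos : C * (ζ - z) + ((ζ - z) ^ 2 + 2 * C * (ζ - z)) < ⨆ x, W x z) :
    slope (fun σ => ⨆ x, W x σ) z ζ < D ((ζ - z) ^ 2 + 2 * C * (ζ - z)) + (ζ - z) := by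
  set m := fun σ => ⨆ x, W x σ
  set h := ζ - z
  have hh : 0 < h := sub_pos.2 hzζ
  have hzI : z ∈ Icc a b := ⟨hz, hzζ.le.trans hζ⟩
  have hζI : ζ ∈ Icc a b := ⟨hz.trans hzζ.le, hζ⟩
  -- `x₁` almost maximizes `W · ζ`, with a defect `h²` that vanishes after division by `h`.
  obtain ⟨x₁, hx₁⟩ : ∃ x₁, m ζ - h ^ 2 < W x₁ ζ :=
    exists_lt_of_lt_ciSup (by simpa [m] using pow_pos hh 2)
  obtain ⟨τ, hτ, hτ_deriv⟩ := exists_deriv_eq_slope (W x₁) hzζ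
    ((hlip x₁).continuousOn.mono (Icc_subset_Icc hz hζ))
    fun σ hσ => (hdiff x₁ σ ⟨hz.trans_lt hσ.1, hσ.2.trans_le hζ⟩).differentiableWithinAt
  have hτI : τ ∈ Icc a b := ⟨hz.trans hτ.1.le, hτ.2.le.trans hζ⟩
  have hlip_m := lipschitzOnWith_iSup hbdd hlip
  have h1 := (hlip x₁).le_add_mul hζI hτI
  have h2 := hlip_m.le_add_mul hτI hζI
  have h3 := hlip_m.le_add_mul hzI hτI
  rw [Real.dist_eq, abs_of_pos (sub_pos.2 hτ.2)] at h1
  rw [Real.dist_eq, abs_of_neg (sub_neg.2 hτ.2)] at h2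
  rw [Real.dist_eq, abs_of_neg (sub_neg.2 hτ.1)] at h3
  have hCτ : (C : ℝ) * (ζ - τ) ≤ C * h := mul_le_mul_of_nonneg_left (by linarith [hτ.1]) C.2
  have hCτ' : (C : ℝ) * -(z - τ) ≤ C * h :=
    mul_le_mul_of_nonneg_left (by linarith [hτ.2]) C.2
  have hmax : ∀ y, W y τ ≤ W x₁ τ + (h ^ 2 + 2 * C * h) := fun y => by
    linarith [le_ciSup (hbdd τ hτI) y]
  have hpos' : 0 < W x₁ τ := by
    linarith [show m z ≤ m τ + C * -(z - τ) from h3, hmax x₁, le_ciSup (hbdd τ hτI) x₁]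
  have hD := hderiv x₁ τ ⟨hz.trans_lt hτ.1, hτ.2.trans_le hζ⟩ _ (by positivity) hpos' hmax
  rw [hτ_deriv, div_le_iff₀ hh] at hD
  rw [slope_def_field, div_lt_iff₀ hh]
  nlinarith [le_ciSup (hbdd z hzI) x₁]

lemma eventually_slope_iSup_lt (hbdd : ∀ σ ∈ Icc a b, BddAbove (range fun x => W x σ))
    (hlip : ∀ x, LipschitzOnWith C (W x) (Icc a b))
    (hdiff : ∀ x, ∀ τ ∈ Ioo a b, DifferentiableAt ℝ (W x) τ) {D : ℝ → ℝ}
    (hD : Tendsto D (𝓝[≥] 0) (𝓝 0))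
    (hderiv : ∀ x, ∀ τ ∈ Ioo a b, ∀ η, 0 ≤ η → 0 < W x τ → (∀ y, W y τ ≤ W x τ + η) →
      deriv (W x) τ ≤ D η)
    {z : ℝ} (hz : z ∈ Ico a b) (hpos : 0 < ⨆ x, W x z) {ρ : ℝ} (hρ : 0 < ρ) :
    ∀ᶠ ζ in 𝓝[>] z, slope (fun σ => ⨆ x, W x σ) z ζ < ρ := by
  have hη : Tendsto (fun ζ => (ζ - z) ^ 2 + 2 * C * (ζ - z)) (𝓝[>] z) (𝓝[≥] 0) := by
    refine tendsto_nhdsWithin_iff.2 ⟨?_, eventually_mem_nhdsWithin.mono fun ζ (hζ : z < ζ) => ?_⟩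
    · exact tendsto_nhdsWithin_of_tendsto_nhds
        (((by fun_prop : Continuous fun ζ : ℝ => (ζ - z) ^ 2 + 2 * C * (ζ - z)).tendsto z).trans
          (by simp))
    · have := sub_pos.2 hζ
      exact (by positivity : (0 : ℝ) ≤ (ζ - z) ^ 2 + 2 * C * (ζ - z))
  have hsmall : Tendsto (fun ζ => ζ - z) (𝓝[>] z) (𝓝 0) :=
    tendsto_nhdsWithin_of_tendsto_nhds (by simpa using (continuous_sub_right z).tendsto z)
  have hdefect : Tendsto (fun ζ => C * (ζ - z) + ((ζ - z) ^ 2 + 2 * C * (ζ - z))) (𝓝[>] z)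
      (𝓝 0) := by
    simpa using (hsmall.const_mul (C : ℝ)).add (tendsto_nhdsWithin_iff.1 hη).1
  filter_upwards [((hD.comp hη).add hsmall).eventually (gt_mem_nhds (by simpa using hρ)),
    hdefect.eventually (gt_mem_nhds hpos), Ioc_mem_nhdsGT hz.2] with ζ hρζ hposζ hζ
  exact (slope_iSup_lt_add hbdd hlip hdiff hderiv hz.1 hζ.1 hζ.2 hposζ).trans hρζ

theorem iSup_nonpos_of_deriv_le (hbdd : ∀ σ ∈ Icc a b, BddAbove (range fun x => W x σ))
    (hlip : ∀ x, LipschitzOnWith C (W x) (Icc a b))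
    (hdiff : ∀ x, ∀ τ ∈ Ioo a b, DifferentiableAt ℝ (W x) τ) {D : ℝ → ℝ}
    (hD : Tendsto D (𝓝[≥] 0) (𝓝 0))
    (hderiv : ∀ x, ∀ τ ∈ Ioo a b, ∀ η, 0 ≤ η → 0 < W x τ → (∀ y, W y τ ≤ W x τ + η) →
      deriv (W x) τ ≤ D η)
    (hinit : ∀ x, W x a ≤ 0) : ∀ σ ∈ Icc a b, ∀ x, W x σ ≤ 0 := fun σ hσ x =>
  (le_ciSup (hbdd σ hσ) x).trans <|
    nonpos_of_frequently_slope_lt (lipschitzOnWith_iSup hbdd hlip).continuousOn (ciSup_le hinit)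
      (fun _ hz hpos _ hρ =>
        (eventually_slope_iSup_lt hbdd hlip hdiff hD hderiv hz hpos hρ).frequently) σ hσ

end SupremumOfFamily

namespace BddLipIcc

variable {n : ℕ} {T : ℝ} {u v : Rn n → ℝ → ℝ}

lemma sub (hu : BddLipIcc T u) (hv : BddLipIcc T v) :
    BddLipIcc T fun x σ => u x σ - v x σ := by
  obtain ⟨Mu, hMub, hMul⟩ := hu
  obtain ⟨Mv, hMvb, hMvl⟩ := hv
  refine ⟨Mu + Mv, fun x σ hσ => ?_, fun x x' σ hσ σ' hσ' => ?_⟩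
  · linarith [abs_sub (u x σ) (v x σ), hMub x σ hσ, hMvb x σ hσ]
  · have h := abs_sub (u x σ - u x' σ') (v x σ - v x' σ')
    rw [show u x σ - u x' σ' - (v x σ - v x' σ') = u x σ - v x σ - (u x' σ' - v x' σ') by ring]
      at h
    linarith [hMul x x' σ hσ σ' hσ', hMvl x x' σ hσ σ' hσ']

lemma bddLip (hu : BddLipIcc T u) {σ : ℝ} (hσ : σ ∈ Icc 0 T) : BddLip fun x => u x σ := by
  obtain ⟨M, hMb, hMl⟩ := hu
  exact ⟨M, fun x => hMb x σ hσ, fun x y => by simpa using hMl x y σ hσ σ hσ⟩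

lemma exists_lipschitzOnWith (hu : BddLipIcc T u) :
    ∃ C : NNReal, (∀ σ ∈ Icc 0 T, ∀ x y, |u x σ - u y σ| ≤ C * ‖x - y‖) ∧
      ∀ x, LipschitzOnWith C (u x) (Icc 0 T) := by
  obtain ⟨M, -, hMl⟩ := hu
  refine ⟨M.toNNReal, fun σ hσ x y => ?_,
    fun x => LipschitzOnWith.of_dist_le_mul fun σ hσ σ' hσ' => ?_⟩
  · have h : |u x σ - u y σ| ≤ M * ‖x - y‖ := by simpa using hMl x y σ hσ σ hσ
    exact h.trans (mul_le_mul_of_nonneg_right M.le_coe_toNNReal (norm_nonneg _))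
  · have h : |u x σ - u x σ'| ≤ M * |σ - σ'| := by simpa using hMl x x σ hσ σ' hσ'
    rw [Real.dist_eq, Real.dist_eq]
    exact h.trans (mul_le_mul_of_nonneg_right M.le_coe_toNNReal (abs_nonneg _))

lemma bddAbove (hu : BddLipIcc T u) {σ : ℝ} (hσ : σ ∈ Icc 0 T) :
    BddAbove (range fun x => u x σ) := by
  obtain ⟨M, hMb, -⟩ := hu
  exact ⟨M, by rintro _ ⟨x, rfl⟩; exact (abs_le.1 (hMb x σ hσ)).2⟩

end BddLipIcc

theorem stmt16_general (n : ℕ) (s lam Lam ε T : ℝ)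
    (hs : s ∈ Ioo (0 : ℝ) (1/2))
    (hε : 0 < ε)
    (K : Rn n → ℝ) (hK : IsKernel n s lam Lam K)
    (φ ψ u0 v0 : Rn n → ℝ) (f g : Rn n → ℝ → ℝ)
    (u v : Rn n → ℝ → ℝ)
    (hu : BddLipIcc T u) (hv : BddLipIcc T v)
    -- continuously differentiable in t on ℝⁿ × (0,T)
    (hudt : ∀ (x : Rn n), ∀ t ∈ Ioo (0:ℝ) T, DifferentiableAt ℝ (u x) t)
    (hvdt : ∀ (x : Rn n), ∀ t ∈ Ioo (0:ℝ) T, DifferentiableAt ℝ (v x) t)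
    -- the penalized equations
    (hequ : ∀ x t, t ∈ Ioo (0:ℝ) T →
      deriv (u x) t + Lop K (fun y => u y t) x
        = Real.exp (-(u x t - φ x) / ε) + f x t)
    (heqv : ∀ x t, t ∈ Ioo (0:ℝ) T →
      deriv (v x) t + Lop K (fun y => v y t) x
        = Real.exp (-(v x t - ψ x) / ε) + g x t)
    -- initial conditions
    (hiu : ∀ x, u x 0 = u0 x) (hiv : ∀ x, v x 0 = v0 x)
    -- ordering of the data
    (h0 : ∀ x, u0 x ≤ v0 x) (hobs : ∀ x, φ x ≤ ψ x)
    (hfg : ∀ x t, t ∈ Ioo 0 T → f x t ≤ g x t) :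
    ∀ x t, t ∈ Ioo 0 T → u x t ≤ v x t := by
  have hw := hu.sub hv
  obtain ⟨C, hspace, htime⟩ := hw.exists_lipschitzOnWith
  have hderiv : ∀ x, ∀ τ ∈ Ioo 0 T, ∀ η, 0 ≤ η → 0 < u x τ - v x τ →
      (∀ y, u y τ - v y τ ≤ u x τ - v x τ + η) →
      deriv (fun σ => u x σ - v x σ) τ
        ≤ Lam * ∫ y : Rn n, min (C * ‖y‖) η * ‖y‖ ^ (-(n : ℝ) - 2 * s) := by
    intro x τ hτ η hη hpos hmax
    have hint : ∀ W : Rn n → ℝ → ℝ, BddLipIcc T W →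
        Integrable fun y => (W x τ - W (x + y) τ) * K y := fun W hW =>
      (hW.bddLip (Ioo_subset_Icc_self hτ)).integrable_Lop_integrand hs hK x
    rw [deriv_fun_sub (hudt x τ hτ) (hvdt x τ hτ)]
    calc _ ≤ -(Lop K (fun y => u y τ) x - Lop K (fun y => v y τ) x) :=
          sub_le_neg_sub_of_penalized hε (hequ x τ hτ) (heqv x τ hτ) (hobs x) (hfg x τ hτ)
            (sub_pos.1 hpos).le
      _ = -Lop K (fun y => u y τ - v y τ) x := by rw [Lop_sub (hint u hu) (hint v hv)]
      _ ≤ _ := neg_Lop_le_of_sub_le_min hs hK (hint _ hw) C.2 hη fun y => le_min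
          (by simpa using (le_abs_self _).trans (hspace τ (Ioo_subset_Icc_self hτ) (x + y) x))
          (by linarith [hmax (x + y)])
  have hD := (tendsto_integral_min_mul_rpow (n := n) hs C.2).const_mul Lam
  rw [mul_zero] at hD
  intro x t ht
  exact sub_nonpos.1 <| iSup_nonpos_of_deriv_le (fun σ hσ => hw.bddAbove hσ) htime
    (fun x τ hτ => (hudt x τ hτ).sub (hvdt x τ hτ)) hD hderiv
    (fun x => by simpa [hiu, hiv] using h0 x) t (Ioo_subset_Icc_self ht) x

/-- comparison principle for the penalized problem: if
`∂ₜu + Lu = β_ε(u-φ) + f`, `∂ₜv + Lv = β_ε(v-ψ) + g`, `u(·,0) = u₀ ≤ v₀ = v(·,0)`,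
`φ ≤ ψ` and `f ≤ g`, then `u ≤ v` on `ℝⁿ × (0,T)`. -/
theorem stmt16 (n : ℕ) (s lam Lam ε T : ℝ)
    (hs : s ∈ Ioo (0 : ℝ) (1/2)) (hlam : 0 < lam) (hll : lam ≤ Lam)
    (hε : 0 < ε) (hT : 0 < T)
    (K : Rn n → ℝ) (hK : IsKernel n s lam Lam K)
    (φ ψ u0 v0 : Rn n → ℝ) (f g : Rn n → ℝ → ℝ)
    (hφ : BddLip φ) (hψ : BddLip ψ) (hu0 : BddLip u0) (hv0 : BddLip v0)
    (hf : BddLipT T f) (hg : BddLipT T g)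
    (u v : Rn n → ℝ → ℝ)
    (hu : BddLipIcc T u) (hv : BddLipIcc T v)
    -- continuously differentiable in t on ℝⁿ × (0,T)
    (hudt : ∀ (x : Rn n), ∀ t ∈ Ioo (0:ℝ) T, DifferentiableAt ℝ (u x) t)
    (hudtc : ∀ x : Rn n, ContinuousOn (deriv (u x)) (Ioo 0 T))
    (hvdt : ∀ (x : Rn n), ∀ t ∈ Ioo (0:ℝ) T, DifferentiableAt ℝ (v x) t)
    (hvdtc : ∀ x : Rn n, ContinuousOn (deriv (v x)) (Ioo 0 T))
    -- the penalized equations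
    (hequ : ∀ x t, t ∈ Ioo (0:ℝ) T →
      deriv (u x) t + Lop K (fun y => u y t) x
        = Real.exp (-(u x t - φ x) / ε) + f x t)
    (heqv : ∀ x t, t ∈ Ioo (0:ℝ) T →
      deriv (v x) t + Lop K (fun y => v y t) x
        = Real.exp (-(v x t - ψ x) / ε) + g x t)
    -- initial conditions
    (hiu : ∀ x, u x 0 = u0 x) (hiv : ∀ x, v x 0 = v0 x)
    -- ordering of the data
    (h0 : ∀ x, u0 x ≤ v0 x) (hobs : ∀ x, φ x ≤ ψ x)
    (hfg : ∀ x t, t ∈ Ioo 0 T → f x t ≤ g x t) :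
    ∀ x t, t ∈ Ioo 0 T → u x t ≤ v x t :=
  stmt16_general n s lam Lam ε T hs hε K hK φ ψ u0 v0 f g u v hu hv hudt hvdt hequ heqv hiu hiv h0
    hobs hfg
end
end
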